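/- Assume the non-parallel condition (NP): A e_i ≠ η A e_j for all indices i ≠ j and all η ∈ ℝ. Let x* ∈ ℝⁿ with support J = supp(x*), and assume supp(P e_j) ∩ supp(P e_k) = ∅ for all j, k ∈ J with j ≠ k. Then there exist real numbers a_j, j ∈ J, such that the vector v = Σ_{j∈J} a_j W⁻¹ P e_j satisfies v_i = sgn(x*_i) for all i ∈ J and v_i ∈ (−1, 1) for all i ∉ J; moreover, for every α > 0 with sgn(x*_j − α a_j) = sgn(x*_j) for all j ∈ J, the vector y*_α = Σ_{j∈J} (x*_j − α a_j) e_j minimizes T_α(x) = ½ ‖P x − P x*‖₂² + α Σ_{i=1}^n w_i |x_i|. -/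

import Mathlib

/-!
Take `a j = sgn (x* j) / w j` and `u = ∑ j ∈ J, a j • e j`, so that `P u = W v`. Since
`(P e_i)_i = w_i² > 0`, disjointness of supports leaves only the term `j = i` of `(P u)_i` for
`i ∈ J`, giving `(P u)_i = sgn (x* i) w_i`. For `i ∉ J` at most one term `j` survives, namely
`sgn (x* j) ⟪P e_i, P e_j⟫ / w_j`, and by (NP) the vectors `P e_i`, `P e_j` are not parallel,
so strict Cauchy–Schwarz gives `|(P u)_i| < w_i`. Hence `P u` is a subgradient of `‖W ·‖₁` at
`y = x* - α u` (the sign hypothesis on `x* - α a`), while `P y - P x* = -α P u`; this is the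
optimality condition for the convex function `T_α`.
-/

open scoped RealInnerProductSpace Classical

/-- The `i`-th standard basis vector of `ℝⁿ`. -/
noncomputable def stdBasis (n : ℕ) (i : Fin n) : EuclideanSpace ℝ (Fin n) :=
  EuclideanSpace.single i 1

/-- `P`: the orthogonal projection of `ℝⁿ` onto the orthogonal complement of `ker A`
(this equals `A†A` for the Moore–Penrose pseudoinverse `A†`). -/
noncomputable def proj {m n : ℕ} (A : EuclideanSpace ℝ (Fin n) →ₗ[ℝ] EuclideanSpace ℝ (Fin m))
    (x : EuclideanSpace ℝ (Fin n)) : EuclideanSpace ℝ (Fin n) :=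
  (Submodule.orthogonalProjectionOnto (LinearMap.ker A)ᗮ x : EuclideanSpace ℝ (Fin n))

/-- The weights `w i = ‖P e_i‖₂`. -/
noncomputable def wgt {m n : ℕ} (A : EuclideanSpace ℝ (Fin n) →ₗ[ℝ] EuclideanSpace ℝ (Fin m))
    (i : Fin n) : ℝ :=
  ‖proj A (stdBasis n i)‖

/-- The weighted ℓ¹ norm `‖W x‖₁ = ∑ i, w i * |x i|`. -/
noncomputable def wl1 {m n : ℕ} (A : EuclideanSpace ℝ (Fin n) →ₗ[ℝ] EuclideanSpace ℝ (Fin m))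
    (x : EuclideanSpace ℝ (Fin n)) : ℝ :=
  ∑ i, wgt A i * |x i|

open Finset

theorem abs_real_inner_lt_norm_mul_norm {F : Type*} [NormedAddCommGroup F] [InnerProductSpace ℝ F]
    {x y : F} (hx : x ≠ 0) (hy : ∀ r : ℝ, y ≠ r • x) : |⟪x, y⟫| < ‖x‖ * ‖y‖ := by
  refine (abs_real_inner_le_norm x y).lt_of_ne fun h => ?_
  rw [← Real.norm_eq_abs] at h
  rcases ((norm_inner_eq_norm_tfae ℝ x y).out 0 2).mp h with h0 | ⟨r, hr⟩
  exacts [hx h0, hy r hr]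

lemma sum_smul_stdBasis_apply {n : ℕ} (J : Finset (Fin n)) (f : Fin n → ℝ) (i : Fin n) :
    (∑ j ∈ J, f j • stdBasis n j) i = if i ∈ J then f i else 0 := by
  simp [stdBasis, Pi.single_apply, mul_ite]

lemma sum_filter_ne_zero_smul_stdBasis {n : ℕ} (x : EuclideanSpace ℝ (Fin n)) :
    ∑ j ∈ univ.filter (fun j => x j ≠ 0), x j • stdBasis n j = x := by
  ext i
  rw [sum_smul_stdBasis_apply]
  by_cases hi : x i = 0 <;> simp [hi]

lemma sum_filter_ne_zero_sub_smul_stdBasis {n : ℕ} (x : EuclideanSpace ℝ (Fin n)) (α : ℝ)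
    (a : Fin n → ℝ) :
    ∑ j ∈ univ.filter (fun j => x j ≠ 0), (x j - α * a j) • stdBasis n j =
      x - α • ∑ j ∈ univ.filter (fun j => x j ≠ 0), a j • stdBasis n j := by
  simp only [sub_smul, sum_sub_distrib, sum_filter_ne_zero_smul_stdBasis, mul_smul, smul_sum]

lemma inner_le_wl1 {m n : ℕ} (A : EuclideanSpace ℝ (Fin n) →ₗ[ℝ] EuclideanSpace ℝ (Fin m))
    {c : EuclideanSpace ℝ (Fin n)} (hc : ∀ i, |c i| ≤ wgt A i) (x : EuclideanSpace ℝ (Fin n)) :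
    ⟪c, x⟫ ≤ wl1 A x := by
  rw [PiLp.inner_apply, wl1]
  refine sum_le_sum fun i _ => ?_
  calc ⟪c i, x i⟫ ≤ |c i| * |x i| := by simpa [abs_mul, mul_comm] using le_abs_self (x i * c i)
    _ ≤ wgt A i * |x i| := by gcongr; exact hc i

lemma wl1_eq_inner {m n : ℕ} (A : EuclideanSpace ℝ (Fin n) →ₗ[ℝ] EuclideanSpace ℝ (Fin m))
    {c y : EuclideanSpace ℝ (Fin n)} (hc : ∀ i, y i ≠ 0 → c i = Real.sign (y i) * wgt A i) :
    wl1 A y = ⟪c, y⟫ := by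
  rw [PiLp.inner_apply, wl1]
  refine sum_congr rfl fun i _ => ?_
  by_cases hi : y i = 0
  · simp [hi]
  · rw [hc i hi, RCLike.inner_apply, conj_trivial]
    rcases lt_or_gt_of_ne hi with h | h
    · rw [Real.sign_of_neg h, abs_of_neg h]; ring
    · rw [Real.sign_of_pos h, abs_of_pos h]; ring

section Projection

variable {m n : ℕ} (A : EuclideanSpace ℝ (Fin n) →ₗ[ℝ] EuclideanSpace ℝ (Fin m))

lemma proj_eq_starProjection : proj A = (LinearMap.ker A)ᗮ.starProjection := rfl

lemma inner_proj_proj (u v : EuclideanSpace ℝ (Fin n)) :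
    ⟪proj A u, proj A v⟫ = ⟪u, proj A v⟫ := by
  rw [proj_eq_starProjection, Submodule.inner_starProjection_left_eq_right,
    Submodule.starProjection_eq_self_iff.mpr (Submodule.starProjection_apply_mem _ _)]

lemma proj_apply_eq_inner (x : EuclideanSpace ℝ (Fin n)) (i : Fin n) :
    proj A x i = ⟪proj A (stdBasis n i), proj A x⟫ := by
  simp [inner_proj_proj, stdBasis, EuclideanSpace.inner_single_left]

lemma proj_stdBasis_apply_self (i : Fin n) : proj A (stdBasis n i) i = wgt A i ^ 2 := by
  rw [proj_apply_eq_inner, real_inner_self_eq_norm_sq, wgt]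

lemma proj_eq_zero_iff {x : EuclideanSpace ℝ (Fin n)} : proj A x = 0 ↔ x ∈ LinearMap.ker A := by
  rw [proj_eq_starProjection, Submodule.starProjection_apply_eq_zero_iff,
    Submodule.orthogonal_orthogonal]

lemma wgt_pos {i : Fin n} (hi : stdBasis n i ∉ LinearMap.ker A) : 0 < wgt A i :=
  norm_pos_iff.mpr fun h => hi ((proj_eq_zero_iff A).mp h)

lemma proj_stdBasis_ne_smul {i j : Fin n} (hij : ∀ η : ℝ, A (stdBasis n i) ≠ η • A (stdBasis n j))
    (r : ℝ) : proj A (stdBasis n i) ≠ r • proj A (stdBasis n j) := by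
  intro h
  have hker : stdBasis n i - r • stdBasis n j ∈ LinearMap.ker A := by
    rw [← proj_eq_zero_iff, proj_eq_starProjection, map_sub, map_smul, ← proj_eq_starProjection, h,
      sub_self]
  rw [LinearMap.mem_ker, map_sub, map_smul, sub_eq_zero] at hker
  exact hij r hker

end Projection

section Certificate

variable {m n : ℕ} (A : EuclideanSpace ℝ (Fin n) →ₗ[ℝ] EuclideanSpace ℝ (Fin m))

/-- `W v` for the paper's certificate `v = ∑ j ∈ J, a j • W⁻¹ P e_j`, where `a j = s j / w j`. -/
noncomputable def dualCert (J : Finset (Fin n)) (s : Fin n → ℝ) : EuclideanSpace ℝ (Fin n) :=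
  proj A (∑ j ∈ J, (s j / wgt A j) • stdBasis n j)

def PairwiseDisjointSupp (J : Finset (Fin n)) : Prop :=
  ∀ j ∈ J, ∀ k ∈ J, j ≠ k → ∀ i, proj A (stdBasis n j) i = 0 ∨ proj A (stdBasis n k) i = 0

variable {A} {J : Finset (Fin n)} {s : Fin n → ℝ}

lemma dualCert_apply (i : Fin n) :
    dualCert A J s i = ∑ j ∈ J, s j / wgt A j * proj A (stdBasis n j) i := by
  simp [dualCert, proj_eq_starProjection, map_sum, map_smul]

lemma dualCert_apply_eq_single (hJ : PairwiseDisjointSupp A J) {i j₀ : Fin n} (hj₀ : j₀ ∈ J)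
    (hi : proj A (stdBasis n j₀) i ≠ 0) :
    dualCert A J s i = s j₀ / wgt A j₀ * proj A (stdBasis n j₀) i := by
  rw [dualCert_apply]
  refine sum_eq_single_of_mem j₀ hj₀ fun j hj hne => ?_
  rcases hJ j hj j₀ hj₀ hne i with h | h
  · rw [h, mul_zero]
  · exact absurd h hi

lemma dualCert_apply_of_mem (hJ : PairwiseDisjointSupp A J)
    (hA : ∀ i, stdBasis n i ∉ LinearMap.ker A) {i : Fin n} (hi : i ∈ J) :
    dualCert A J s i = s i * wgt A i := by
  have hw := wgt_pos A (hA i)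
  rw [dualCert_apply_eq_single hJ hi (by rw [proj_stdBasis_apply_self]; positivity),
    proj_stdBasis_apply_self]
  field_simp

lemma abs_dualCert_apply_lt (hJ : PairwiseDisjointSupp A J)
    (hA : ∀ i, stdBasis n i ∉ LinearMap.ker A)
    (hNP : ∀ i j : Fin n, i ≠ j → ∀ η : ℝ, A (stdBasis n i) ≠ η • A (stdBasis n j))
    (hs : ∀ j ∈ J, |s j| ≤ 1) {i : Fin n} (hi : i ∉ J) : |dualCert A J s i| < wgt A i := by
  by_cases h : ∃ j ∈ J, proj A (stdBasis n j) i ≠ 0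
  · obtain ⟨j, hj, hji⟩ := h
    have hwj := wgt_pos A (hA j)
    have hCS : |⟪proj A (stdBasis n j), proj A (stdBasis n i)⟫| < wgt A j * wgt A i :=
      abs_real_inner_lt_norm_mul_norm (norm_pos_iff.mp hwj)
        (proj_stdBasis_ne_smul A (hNP i j (ne_of_mem_of_not_mem hj hi).symm))
    rw [dualCert_apply_eq_single hJ hj hji, proj_apply_eq_inner, real_inner_comm]
    calc |s j / wgt A j * ⟪proj A (stdBasis n j), proj A (stdBasis n i)⟫|
        = |s j| / wgt A j * |⟪proj A (stdBasis n j), proj A (stdBasis n i)⟫| := by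
          rw [abs_mul, abs_div, abs_of_pos hwj]
      _ ≤ 1 / wgt A j * |⟪proj A (stdBasis n j), proj A (stdBasis n i)⟫| := by
          gcongr; exact hs j hj
      _ < 1 / wgt A j * (wgt A j * wgt A i) := by gcongr
      _ = wgt A i := by field_simp
  · push Not at h
    rw [dualCert_apply, sum_eq_zero fun j hj => by rw [h j hj, mul_zero], abs_zero]
    exact wgt_pos A (hA i)

lemma abs_dualCert_apply_le (hJ : PairwiseDisjointSupp A J)
    (hA : ∀ i, stdBasis n i ∉ LinearMap.ker A)
    (hNP : ∀ i j : Fin n, i ≠ j → ∀ η : ℝ, A (stdBasis n i) ≠ η • A (stdBasis n j))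
    (hs : ∀ j ∈ J, |s j| ≤ 1) (i : Fin n) : |dualCert A J s i| ≤ wgt A i := by
  by_cases hi : i ∈ J
  · rw [dualCert_apply_of_mem hJ hA hi, abs_mul, abs_of_pos (wgt_pos A (hA i))]
    exact mul_le_of_le_one_left (wgt_pos A (hA i)).le (hs i hi)
  · exact (abs_dualCert_apply_lt hJ hA hNP hs hi).le

end Certificate

section Objective

variable {m n : ℕ} (A : EuclideanSpace ℝ (Fin n) →ₗ[ℝ] EuclideanSpace ℝ (Fin m))

/-- The paper's `T_α`, with `b` in the role of `x*`. -/
noncomputable def lassoObjective (b : EuclideanSpace ℝ (Fin n)) (α : ℝ)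
    (x : EuclideanSpace ℝ (Fin n)) : ℝ :=
  1 / 2 * ‖proj A x - proj A b‖ ^ 2 + α * wl1 A x

/-- `P u` is a subgradient of `wl1 A` at `b - α • u` and `P (b - α • u) - P b = -α • P u`:
the first-order optimality condition for the convex function `lassoObjective A b α`. -/
theorem lassoObjective_le_of_certificate {b u : EuclideanSpace ℝ (Fin n)} {α : ℝ} (hα : 0 ≤ α)
    (hc : ∀ i, |proj A u i| ≤ wgt A i)
    (hsign : ∀ i, (b - α • u) i ≠ 0 → proj A u i = Real.sign ((b - α • u) i) * wgt A i)
    (x : EuclideanSpace ℝ (Fin n)) :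
    lassoObjective A b α (b - α • u) ≤ lassoObjective A b α x := by
  set y := b - α • u
  have hPy : proj A y - proj A b = -α • proj A u := by
    simp only [y, proj_eq_starProjection, map_sub, map_smul]
    module
  have hcross : ⟪proj A x - proj A y, proj A u⟫ = ⟪proj A u, x⟫ - ⟪proj A u, y⟫ := by
    rw [proj_eq_starProjection, ← map_sub, ← proj_eq_starProjection, inner_proj_proj,
      real_inner_comm, inner_sub_right]
  have hsplit : proj A x - proj A b = (proj A x - proj A y) + (proj A y - proj A b) := by abel
  unfold lassoObjective
  rw [hsplit, norm_add_sq_real, hPy, inner_smul_right, hcross, wl1_eq_inner A hsign]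
  nlinarith [sq_nonneg ‖proj A x - proj A y‖, mul_le_mul_of_nonneg_left (inner_le_wl1 A hc x) hα]

end Objective

theorem stmt9 {m n : ℕ}
    (A : EuclideanSpace ℝ (Fin n) →ₗ[ℝ] EuclideanSpace ℝ (Fin m))
    (hA : ∀ i, stdBasis n i ∉ LinearMap.ker A)
    (hNP : ∀ i j : Fin n, i ≠ j → ∀ η : ℝ, A (stdBasis n i) ≠ η • A (stdBasis n j))
    (xstar : EuclideanSpace ℝ (Fin n))
    (hdisj : ∀ j k : Fin n, xstar j ≠ 0 → xstar k ≠ 0 → j ≠ k →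
      ∀ i, proj A (stdBasis n j) i = 0 ∨ proj A (stdBasis n k) i = 0) :
    ∃ a : Fin n → ℝ,
      (∀ i, xstar i ≠ 0 →
        (∑ j ∈ Finset.univ.filter (fun j => xstar j ≠ 0),
          a j * ((wgt A i)⁻¹ * proj A (stdBasis n j) i)) = Real.sign (xstar i)) ∧
      (∀ i, xstar i = 0 →
        (∑ j ∈ Finset.univ.filter (fun j => xstar j ≠ 0),
          a j * ((wgt A i)⁻¹ * proj A (stdBasis n j) i)) ∈ Set.Ioo (-1 : ℝ) 1) ∧
      ∀ α : ℝ, 0 < α →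
        (∀ j, xstar j ≠ 0 → Real.sign (xstar j - α * a j) = Real.sign (xstar j)) →
        ∀ x : EuclideanSpace ℝ (Fin n),
          (1 / 2) * ‖proj A (∑ j ∈ Finset.univ.filter (fun j => xstar j ≠ 0),
              (xstar j - α * a j) • stdBasis n j) - proj A xstar‖ ^ 2 +
            α * wl1 A (∑ j ∈ Finset.univ.filter (fun j => xstar j ≠ 0),
              (xstar j - α * a j) • stdBasis n j) ≤
          (1 / 2) * ‖proj A x - proj A xstar‖ ^ 2 + α * wl1 A x := by
  set J := univ.filter fun j => xstar j ≠ 0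
  have hmem (i : Fin n) : i ∈ J ↔ xstar i ≠ 0 := by simp [J]
  have hJ : PairwiseDisjointSupp A J := fun j hj k hk =>
    hdisj j k ((hmem j).mp hj) ((hmem k).mp hk)
  set s := fun j => Real.sign (xstar j)
  have hs (j : Fin n) (_ : j ∈ J) : |s j| ≤ 1 := by
    rcases Real.sign_apply_eq (xstar j) with h | h | h <;> simp [s, h]
  have hv (i : Fin n) : ∑ j ∈ J, s j / wgt A j * ((wgt A i)⁻¹ * proj A (stdBasis n j) i) =
      (wgt A i)⁻¹ * dualCert A J s i := by
    rw [dualCert_apply, mul_sum]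
    exact sum_congr rfl fun j _ => mul_left_comm _ _ _
  refine ⟨fun j => s j / wgt A j, fun i hi => ?_, fun i hi => ?_, fun α hα hsgn x => ?_⟩
  · rw [hv, dualCert_apply_of_mem hJ hA ((hmem i).mpr hi), mul_left_comm,
      inv_mul_cancel₀ (wgt_pos A (hA i)).ne', mul_one]
  · have hw := wgt_pos A (hA i)
    rw [hv, Set.mem_Ioo, ← abs_lt, abs_mul, abs_inv, abs_of_pos hw, inv_mul_lt_one₀ hw]
    exact abs_dualCert_apply_lt hJ hA hNP hs fun h => (hmem i).mp h hi
  · set u := ∑ j ∈ J, (s j / wgt A j) • stdBasis n j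
    have hsign (i : Fin n) (hi : (xstar - α • u) i ≠ 0) :
        proj A u i = Real.sign ((xstar - α • u) i) * wgt A i := by
      have hiJ : i ∈ J := by
        by_contra hiJ
        simp [u, sum_smul_stdBasis_apply, hiJ, not_not.mp (mt (hmem i).mpr hiJ)] at hi
      rw [PiLp.sub_apply, PiLp.smul_apply, sum_smul_stdBasis_apply, if_pos hiJ, smul_eq_mul,
        hsgn i ((hmem i).mp hiJ)]
      exact dualCert_apply_of_mem hJ hA hiJ
    rw [sum_filter_ne_zero_sub_smul_stdBasis]
    exact lassoObjective_le_of_certificate A hα.le (abs_dualCert_apply_le hJ hA hNP hs) hsign x
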